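/- Let ω : V × V → ℂ be ℝ-bilinear, alternating, and of type (1,1). Define ω_ℂ((a, b), (c, d)) = ω(a, c) − ω(b, d) + i·(ω(a, d) + ω(b, c)) for a, b, c, d ∈ V (the complex-bilinear extension of ω to the complexification, with (a, b) representing a + ib). Then for all v₁, v₂, w₁, w₂ ∈ V: ω_ℂ((v₁ + v₂, J*v₁ + Jv₂), (w₁ + w₂, J*w₁ + Jw₂)) = ω_ℂ((v₁, J*v₁), (w₂, Jw₂)) − ω_ℂ((w₁, J*w₁), (v₂, Jv₂)). -/

import Mathlib

/-! Complexify each real functional ξ to ξ_ℂ(a, b) = ξ a + i ξ b. For J-linear ξ, ξ_ℂ vanishes on every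
vector (w, J w), so ξ_ℂ(v₁ + v₂, J*v₁ + Jv₂) = ξ_ℂ(v₁, J*v₁), and symmetrically a J*-linear ζ only
sees (v₂, Jv₂). For a generator ξ ∧ ζ we have ω_ℂ(x, y) = ξ_ℂ x ζ_ℂ y − ξ_ℂ y ζ_ℂ x, and the
identity follows by expanding; both sides are ℂ-linear in ω, so it passes to the span. -/

open Complex

/-- An alternating ℝ-bilinear map ω : V × V → ℂ is of type (1,1) if it lies in the
ℂ-linear span of the maps (v,w) ↦ ξ(v)ζ(w) − ξ(w)ζ(v) with ξ J-linear and ζ J*-linear. -/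
def IsType11 (V : Type*) [AddCommGroup V] [Module ℝ V] (J Jstar : V →ₗ[ℝ] V)
    (ω : V →ₗ[ℝ] V →ₗ[ℝ] ℂ) : Prop :=
  ω ∈ Submodule.span ℂ {η : V →ₗ[ℝ] V →ₗ[ℝ] ℂ | ∃ ξ ζ : V →ₗ[ℝ] ℂ,
    (∀ v, ξ (J v) = I * ξ v) ∧ (∀ v, ζ (Jstar v) = I * ζ v) ∧
    ∀ v w, η v w = ξ v * ζ w - ξ w * ζ v}

/-- The complex-bilinear extension of ω to the complexification V × V
(with (a, b) representing a + ib). -/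
noncomputable def omegaC {V : Type*} [AddCommGroup V] [Module ℝ V]
    (ω : V →ₗ[ℝ] V →ₗ[ℝ] ℂ) (x y : V × V) : ℂ :=
  ω x.1 y.1 - ω x.2 y.2 + I * (ω x.1 y.2 + ω x.2 y.1)

section Complexification

variable {V : Type*} [AddCommGroup V] [Module ℝ V]

noncomputable def complexify (ξ : V →ₗ[ℝ] ℂ) (x : V × V) : ℂ :=
  ξ x.1 + I * ξ x.2

lemma complexify_graph_eq_zero {J : V →ₗ[ℝ] V} {ξ : V →ₗ[ℝ] ℂ}
    (hξ : ∀ v, ξ (J v) = I * ξ v) (w : V) : complexify ξ (w, J w) = 0 := by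
  simp only [complexify, hξ, ← mul_assoc, I_mul_I]
  ring

lemma complexify_add_graph {J K : V →ₗ[ℝ] V} {ξ : V →ₗ[ℝ] ℂ}
    (hξ : ∀ v, ξ (J v) = I * ξ v) (u w : V) :
    complexify ξ (u + w, K u + J w) = complexify ξ (u, K u) := by
  have h := complexify_graph_eq_zero hξ w
  simp only [complexify, map_add] at h ⊢
  linear_combination h

lemma omegaC_eq_of_wedge {ξ ζ : V →ₗ[ℝ] ℂ} {η : V →ₗ[ℝ] V →ₗ[ℝ] ℂ}
    (hη : ∀ v w, η v w = ξ v * ζ w - ξ w * ζ v) (x y : V × V) :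
    omegaC η x y = complexify ξ x * complexify ζ y - complexify ξ y * complexify ζ x := by
  simp only [omegaC, complexify, hη]
  linear_combination (ξ y.2 * ζ x.2 - ξ x.2 * ζ y.2) * I_mul_I

noncomputable def omegaCₗ (x y : V × V) : (V →ₗ[ℝ] V →ₗ[ℝ] ℂ) →ₗ[ℂ] ℂ where
  toFun ω := omegaC ω x y
  map_add' ω ω' := by
    simp only [omegaC, LinearMap.add_apply]
    ring
  map_smul' c ω := by
    simp only [omegaC, LinearMap.smul_apply, smul_eq_mul, RingHom.id_apply]
    ring

end Complexification

theorem type_one_one_pairing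
    (V : Type*) [AddCommGroup V] [Module ℝ V]
    (J Jstar : V →ₗ[ℝ] V)
    (ω : V →ₗ[ℝ] V →ₗ[ℝ] ℂ)
    (h11 : IsType11 V J Jstar ω) :
    ∀ v₁ v₂ w₁ w₂ : V,
      omegaC ω (v₁ + v₂, Jstar v₁ + J v₂) (w₁ + w₂, Jstar w₁ + J w₂)
        = omegaC ω (v₁, Jstar v₁) (w₂, J w₂) - omegaC ω (w₁, Jstar w₁) (v₂, J v₂) := by
  intro v₁ v₂ w₁ w₂
  refine (Submodule.span_le (p := LinearMap.eqLocus
    (omegaCₗ (v₁ + v₂, Jstar v₁ + J v₂) (w₁ + w₂, Jstar w₁ + J w₂))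
    (omegaCₗ (v₁, Jstar v₁) (w₂, J w₂) - omegaCₗ (w₁, Jstar w₁) (v₂, J v₂)))).mpr ?_ h11
  rintro η ⟨ξ, ζ, hξ, hζ, hη⟩
  have hζ_add (u w : V) : complexify ζ (u + w, Jstar u + J w) = complexify ζ (w, J w) := by
    rw [add_comm u, add_comm (Jstar u)]
    exact complexify_add_graph hζ w u
  change omegaC η _ _ = omegaC η _ _ - omegaC η _ _
  simp only [omegaC_eq_of_wedge hη, complexify_add_graph hξ, hζ_add,
    complexify_graph_eq_zero hξ, complexify_graph_eq_zero hζ]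
  ring
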